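/- arXiv:1603.04211 — 5 statements merged into one kernel-verified Lean document; each statement's English description precedes it below -/
import Mathlib

section
/- For every positive integer p, ⌊φ(p + ⌊φp⌋ + 1)⌋ = p, where φ = (√5 − 1)/2. -/
noncomputable def phi : ℝ := (Real.sqrt 5 - 1) / 2

theorem stmt_0 (p : ℕ) (hp : 1 ≤ p) :
    ⌊phi * ((p : ℝ) + (⌊phi * (p : ℝ)⌋ : ℝ) + 1)⌋ = (p : ℤ) := by
  have h5 : Real.sqrt 5 ^ 2 = 5 := Real.sq_sqrt (by norm_num)
  have h5lb : (2 : ℝ) < Real.sqrt 5 := by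
    nlinarith [Real.sqrt_nonneg 5]
  have h5ub : Real.sqrt 5 < 3 := by
    nlinarith [Real.sqrt_nonneg 5]
  have hphi_pos : 0 < phi := by unfold phi; linarith
  have hphi_lt : phi < 1 := by unfold phi; linarith
  have hsq : phi ^ 2 = 1 - phi := by unfold phi; nlinarith
  set q : ℝ := (⌊phi * (p : ℝ)⌋ : ℝ) with hq
  have hle : q ≤ phi * p := Int.floor_le _
  have hlt : phi * p < q + 1 := Int.lt_floor_add_one _
  rw [Int.floor_eq_iff]
  constructor
  · push_cast
    nlinarith
  · push_cast
    nlinarith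
end

section
/- For every positive integer p, ⌊φ(2p + ⌊φp⌋ + 1)⌋ = p + ⌊φp⌋, where φ = (√5 − 1)/2. -/
theorem stmt_1 (p : ℕ) (hp : 1 ≤ p) :
    ⌊phi * (2 * (p : ℝ) + (⌊phi * (p : ℝ)⌋ : ℝ) + 1)⌋ = (p : ℤ) + ⌊phi * (p : ℝ)⌋ := by
  have hs : Real.sqrt 5 ^ 2 = 5 := Real.sq_sqrt (by norm_num)
  have hs2 : (2:ℝ) < Real.sqrt 5 := by nlinarith [Real.sqrt_nonneg 5]
  have h1 : (⌊phi * (p:ℝ)⌋ : ℝ) ≤ phi * p := Int.floor_le _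
  have h2 : phi * (p:ℝ) < ⌊phi * (p:ℝ)⌋ + 1 := Int.lt_floor_add_one _
  rw [Int.floor_eq_iff]
  push_cast
  constructor <;> · simp only [phi] at *
                    nlinarith [mul_pos (sub_pos.mpr h2) (by nlinarith : (0:ℝ) < 1 - (Real.sqrt 5 - 1)/2),
                      mul_nonneg (sub_nonneg.mpr h1) (by nlinarith : (0:ℝ) ≤ 1 - (Real.sqrt 5 - 1)/2)]
end

section
/- For every m ≥ 1, ⌊φ(f_m − 1)⌋ = f_{m−1} − 1, where φ = (√5 − 1)/2 and f is the Fibonacci numbering with f_{−1} = 1, f_0 = 1, f_{m+1} = f_m + f_{m−1}. -/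
lemma sqrt5_sq : Real.sqrt 5 ^ 2 = 5 := Real.sq_sqrt (by norm_num)

lemma phi_sq : phi ^ 2 = 1 - phi := by
  have h := sqrt5_sq
  unfold phi; nlinarith [h]

lemma phi_pos : 0 < phi := by
  have h := sqrt5_sq
  have h5 : (2:ℝ) < Real.sqrt 5 := by nlinarith [Real.sqrt_nonneg 5]
  unfold phi; linarith

lemma phi_lt : phi < 0.62 := by
  have h := sqrt5_sq
  have h5 : Real.sqrt 5 < 2.24 := by nlinarith [Real.sqrt_nonneg 5]
  unfold phi; linarith

lemma phi_gt : 0.61 < phi := by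
  have h := sqrt5_sq
  have h5 : (2.22:ℝ) < Real.sqrt 5 := by nlinarith [Real.sqrt_nonneg 5]
  unfold phi; linarith

lemma fib_phi : ∀ n : ℕ, phi * (Nat.fib (n+1) : ℝ) = (Nat.fib n : ℝ) - (-phi)^(n+1) := by
  intro n
  induction n using Nat.twoStepInduction with
  | zero => simp
  | one =>
    have h := phi_sq
    simp [Nat.fib]
    nlinarith [h]
  | more n ih1 ih2 =>
    have key : (-phi)^(n+3) = (-phi)^(n+1) + (-phi)^(n+2) := by
      have : (-phi)^(n+3) = (-phi)^(n+1) * phi^2 := by ring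
      rw [this, phi_sq]; ring
    have hfib : (Nat.fib (n+3) : ℝ) = Nat.fib (n+2) + Nat.fib (n+1) := by
      rw [Nat.fib_add_two]; push_cast; ring
    have hfib2 : (Nat.fib (n+2) : ℝ) = Nat.fib (n+1) + Nat.fib n := by
      rw [Nat.fib_add_two]; push_cast; ring
    rw [hfib, key]
    linear_combination ih1 + ih2 - hfib2

/-- `f_m = Nat.fib (m + 2)` (so `f₀ = 1, f₁ = 2, …`).
For `m ≥ 1`, `⌊φ (f_m − 1)⌋ = f_{m−1} − 1`. -/
theorem stmt_4 (m : ℕ) (hm : 1 ≤ m) :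
    ⌊phi * ((Nat.fib (m + 2) : ℝ) - 1)⌋ = (Nat.fib (m + 1) : ℤ) - 1 := by
  have h := fib_phi (m+1)
  rw [show m+1+1 = m+2 from rfl] at h
  have habs : |(-phi)^(m+2)| ≤ phi^3 := by
    rw [abs_pow, abs_neg, abs_of_pos phi_pos]
    exact pow_le_pow_of_le_one (le_of_lt phi_pos) (by linarith [phi_lt]) (by omega)
  have hb := abs_le.mp habs
  have h1 := phi_lt
  have h2 := phi_gt
  have hp := phi_pos
  have h3 : phi^3 < 0.24 := by
    have hc : phi^3 ≤ 0.62^3 := pow_le_pow_left₀ hp.le h1.le 3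
    norm_num at hc; linarith
  rw [Int.floor_eq_iff]
  constructor
  · push_cast
    rw [mul_sub, h]
    linarith [hb.1, hb.2]
  · push_cast
    rw [mul_sub, h]
    linarith [hb.1, hb.2]
end

section
/- For all m ≥ −1, K_{m+3} = K_{m+1} K_m K_{m+1}, where K_m denotes the m-th singular word of the Fibonacci word. -/
/-- Finite Fibonacci words, shifted: `FwS 0 = F₋₁ = b`, `FwS (m+1) = F_m`
(`F₀ = a`, `F₁ = ab`, `F_{m+1} = F_m F_{m-1}`), letters `a = false`, `b = true`. -/
def FwS : ℕ → List Bool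
  | 0 => [true]
  | 1 => [false]
  | n + 2 => FwS (n + 1) ++ FwS n

/-- `del n` is the letter `δ_n` (the last letter of `F_n`): `a` iff `n` is even. -/
def del (n : ℕ) : Bool := if Even n then false else true

/-- `singK n = K_{n-1}`, the `(n-1)`-st singular word (so `n` ranges over `ℕ`
as the paper's index ranges over `m ≥ -1`):
`K_m = δ_{m+1} · F_m[1, f_m − 1]`. -/
def singK (n : ℕ) : List Bool := del n :: (FwS n).dropLast

/-!
Unfolding the recursion twice gives `F_{m+3} = F_{m+1} F_m F_{m+1}`. Deleting the last letter
of this product leaves the last letters `δ_{m+1}` and `δ_m` of the first two factors in place,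
and these are exactly the letters prepended to the next factors in `K_m` and `K_{m+1}`; the
letter prepended in `K_{m+3}` is `δ_{m+4} = δ_{m+2}`, the one prepended in `K_{m+1}`.
-/

lemma del_add_two (n : ℕ) : del (n + 2) = del n := by
  simp [del, Nat.even_add_one]

lemma FwS_ne_nil : ∀ n, FwS n ≠ []
  | 0 | 1 => by simp [FwS]
  | n + 2 => by simp [FwS, FwS_ne_nil n]

lemma FwS_add_three (n : ℕ) : FwS (n + 3) = FwS (n + 1) ++ FwS n ++ FwS (n + 1) := by
  rw [FwS, FwS, List.append_assoc]

/-- The shift of indices makes the last letter of `FwS n = F_{n-1}` equal to `del (n + 1)`. -/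
lemma dropLast_FwS_append_del : ∀ n, (FwS n).dropLast ++ [del (n + 1)] = FwS n
  | 0 | 1 => by decide
  | n + 2 => by
    rw [FwS, List.dropLast_append_of_ne_nil (FwS_ne_nil n), List.append_assoc,
      show n + 2 + 1 = n + 1 + 2 from rfl, del_add_two, dropLast_FwS_append_del n]

/-- `K_{m+3} = K_{m+1} K_m K_{m+1}` for all `m ≥ -1` (here `n = m + 1`). -/
theorem stmt_6 (n : ℕ) :
    singK (n + 3) = singK (n + 1) ++ singK n ++ singK (n + 1) := by
  have hF : FwS (n + 1) ++ FwS n =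
      (FwS (n + 1)).dropLast ++ [del n] ++ ((FwS n).dropLast ++ [del (n + 1)]) := by
    rw [dropLast_FwS_append_del, ← del_add_two, dropLast_FwS_append_del]
  rw [singK, FwS_add_three, List.dropLast_append_of_ne_nil (FwS_ne_nil _), hF,
    show n + 3 = n + 1 + 2 from rfl, del_add_two]
  simp [singK]
end

section
/- Every singular word K_m (m ≥ −1) of the Fibonacci word is a palindrome. -/
/-- central palindromic part of `FwS (n+2)` -/
def D : ℕ → List Bool
  | 0 => []
  | 1 => [false]
  | n + 2 => FwS (n + 3) ++ D n

lemma decA : ∀ n, FwS (n + 2) = D n ++ [del n, del (n + 1)]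
  | 0 => rfl
  | 1 => rfl
  | n + 2 => by
    show FwS (n + 3) ++ FwS (n + 2) = D (n + 2) ++ [del (n + 2), del (n + 3)]
    rw [decA n, del_add_two, del_add_two (n + 1)]
    show FwS (n + 3) ++ (D n ++ [del n, del (n + 1)])
        = FwS (n + 3) ++ D n ++ [del n, del (n + 1)]
    simp

lemma decB : ∀ n, D (n + 1) = FwS (n + 1) ++ D n
  | 0 => rfl
  | n + 1 => by
    show FwS (n + 3) ++ D n = FwS (n + 2) ++ D (n + 1)
    rw [decB n]
    show FwS (n + 2) ++ FwS (n + 1) ++ D n = FwS (n + 2) ++ (FwS (n + 1) ++ D n)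
    simp

lemma palD : ∀ n, (D n).reverse = D n
  | 0 => rfl
  | 1 => rfl
  | n + 2 => by
    have h2 : D (n + 2) = FwS (n + 2) ++ D (n + 1) := decB (n + 1)
    rw [h2, List.reverse_append, palD (n + 1), decA n, List.reverse_append,
      palD n]
    have h3 : D n ++ [del n, del (n + 1)] ++ D (n + 1)
        = D (n + 1) ++ [del (n + 1), del n] ++ D n := by
      have h4 : D (n + 2) = FwS (n + 3) ++ D n := rfl
      have h5 : D (n + 2) = FwS (n + 2) ++ D (n + 1) := h2
      rw [decA n] at h5
      rw [decA (n + 1), del_add_two n] at h4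
      simp only [List.append_assoc] at h4 h5 ⊢
      rw [← h5, h4]
    rw [h3]
    simp

/-- Every singular word is a palindrome. -/
theorem stmt_8 (n : ℕ) : (singK n).reverse = singK n := by
  match n with
  | 0 => rfl
  | 1 => rfl
  | n + 2 =>
    have h : (FwS (n + 2)).dropLast = D n ++ [del n] := by
      rw [decA n]
      rw [show D n ++ [del n, del (n + 1)] = (D n ++ [del n]) ++ [del (n + 1)] by simp]
      simp
    simp only [singK, h, del_add_two]
    rw [List.reverse_cons, List.reverse_append, palD n]
    simp
end
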